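/- arXiv:2603.20845 — 3 statements merged into one kernel-verified Lean document; each statement's English description precedes it below -/
import Mathlib

section
/- A formula of InqBQ is truth-conditional if and only if it is equivalent to a classical formula. In particular, every classical formula is truth-conditional. -/
namespace InqBQ

/-- A signature: predicate symbols and function symbols, each with an arity. -/
structure Sig where
  Pred : Type
  parity : Pred → ℕ
  Func : Type
  farity : Func → ℕ

/-- Terms over a signature, with variables indexed by `ℕ`. -/
inductive Term (σ : Sig) : Type where
  | var : ℕ → Term σ
  | func : (f : σ.Func) → (Fin (σ.farity f) → Term σ) → Term σ

/-- Formulas of InqBQ. -/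
inductive Formula (σ : Sig) : Type where
  | pred : (P : σ.Pred) → (Fin (σ.parity P) → Term σ) → Formula σ
  | eq : Term σ → Term σ → Formula σ
  | falsum : Formula σ
  | conj : Formula σ → Formula σ → Formula σ
  | idisj : Formula σ → Formula σ → Formula σ
  | impl : Formula σ → Formula σ → Formula σ
  | all : ℕ → Formula σ → Formula σ
  | iex : ℕ → Formula σ → Formula σ

variable {σ : Sig}

/-- ¬φ := φ → ⊥ -/
def Formula.neg (φ : Formula σ) : Formula σ := .impl φ .falsum

/-- ?φ := φ ⩒ ¬φ -/
def Formula.qm (φ : Formula σ) : Formula σ := .idisj φ φ.neg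

/-- ⊤ := ¬⊥ -/
def Formula.verum : Formula σ := Formula.neg .falsum

/-- Classical formulas: no inquisitive disjunction, no inquisitive existential. -/
def Formula.IsClassical : Formula σ → Prop
  | .pred _ _ => True
  | .eq _ _ => True
  | .falsum => True
  | .conj φ ψ => φ.IsClassical ∧ ψ.IsClassical
  | .idisj _ _ => False
  | .impl φ ψ => φ.IsClassical ∧ ψ.IsClassical
  | .all _ φ => φ.IsClassical
  | .iex _ _ => False

/-- The variable `n` occurs in a term. -/
def Term.VarOccurs : Term σ → ℕ → Prop
  | .var m, n => m = n
  | .func _ ts, n => ∃ i, (ts i).VarOccurs n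

/-- The variable `n` occurs free in a formula. -/
def Formula.FreeVar : Formula σ → ℕ → Prop
  | .pred _ ts, n => ∃ i, (ts i).VarOccurs n
  | .eq t t', n => t.VarOccurs n ∨ t'.VarOccurs n
  | .falsum, _ => False
  | .conj φ ψ, n => φ.FreeVar n ∨ ψ.FreeVar n
  | .idisj φ ψ, n => φ.FreeVar n ∨ ψ.FreeVar n
  | .impl φ ψ, n => φ.FreeVar n ∨ ψ.FreeVar n
  | .all x φ, n => n ≠ x ∧ φ.FreeVar n
  | .iex x φ, n => n ≠ x ∧ φ.FreeVar n

/-- A sentence is a formula with no free variables. -/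
def Formula.IsSentence (φ : Formula σ) : Prop := ∀ n, ¬ φ.FreeVar n

/-- A first-order information model `M = (W, D, I, ∼)`. -/
structure Model (σ : Sig) where
  W : Type
  D : Type
  wNonempty : Nonempty W
  dNonempty : Nonempty D
  predI : W → (P : σ.Pred) → (Fin (σ.parity P) → D) → Prop
  funcI : W → (f : σ.Func) → (Fin (σ.farity f) → D) → D
  eqI : W → D → D → Prop
  eqEquiv : ∀ w, Equivalence (eqI w)
  predCongr : ∀ w P (as bs : Fin (σ.parity P) → D),
      (∀ i, eqI w (as i) (bs i)) → (predI w P as ↔ predI w P bs)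
  funcCongr : ∀ w f (as bs : Fin (σ.farity f) → D),
      (∀ i, eqI w (as i) (bs i)) → eqI w (funcI w f as) (funcI w f bs)

/-- Denotation `[t]^g_w` of a term at a world under an assignment. -/
def Term.val (M : Model σ) (w : M.W) (g : ℕ → M.D) : Term σ → M.D
  | .var n => g n
  | .func f ts => M.funcI w f (fun i => (ts i).val M w g)

/-- The support relation `M, s ⊨_g φ`. -/
def Support (M : Model σ) : Set M.W → (ℕ → M.D) → Formula σ → Prop
  | s, g, .pred P ts => ∀ w ∈ s, M.predI w P (fun i => (ts i).val M w g)
  | s, g, .eq t t' => ∀ w ∈ s, M.eqI w (t.val M w g) (t'.val M w g)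
  | s, _, .falsum => s = ∅
  | s, g, .conj φ ψ => Support M s g φ ∧ Support M s g ψ
  | s, g, .idisj φ ψ => Support M s g φ ∨ Support M s g ψ
  | s, g, .impl φ ψ => ∀ t : Set M.W, t ⊆ s → Support M t g φ → Support M t g ψ
  | s, g, .all x φ => ∀ d : M.D, Support M s (Function.update g x d) φ
  | s, g, .iex x φ => ∃ d : M.D, Support M s (Function.update g x d) φ

/-- Id-models: `=` is interpreted as identity on the domain at each world. -/
def Model.IsId (M : Model σ) : Prop := ∀ w (d d' : M.D), M.eqI w d d' ↔ d = d'

/-- Entailment in InqBQ. -/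
def Entails (Φ : Set (Formula σ)) (ψ : Formula σ) : Prop :=
  ∀ (M : Model σ) (s : Set M.W) (g : ℕ → M.D),
    (∀ φ ∈ Φ, Support M s g φ) → Support M s g ψ

/-- Entailment restricted to id-models. -/
def EntailsId (Φ : Set (Formula σ)) (ψ : Formula σ) : Prop :=
  ∀ (M : Model σ), M.IsId → ∀ (s : Set M.W) (g : ℕ → M.D),
    (∀ φ ∈ Φ, Support M s g φ) → Support M s g ψ

/-- Validity in InqBQ. -/
def Valid (ψ : Formula σ) : Prop :=
  ∀ (M : Model σ) (s : Set M.W) (g : ℕ → M.D), Support M s g ψ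

/-- Validity over id-models. -/
def IdValid (ψ : Formula σ) : Prop :=
  ∀ (M : Model σ), M.IsId → ∀ (s : Set M.W) (g : ℕ → M.D), Support M s g ψ

/-- Equivalence of formulas. -/
def FmEquiv (φ ψ : Formula σ) : Prop :=
  ∀ (M : Model σ) (s : Set M.W) (g : ℕ → M.D), Support M s g φ ↔ Support M s g ψ

/-- A formula is truth-conditional if support at a state reduces to truth at each world. -/
def TruthConditional (φ : Formula σ) : Prop :=
  ∀ (M : Model σ) (s : Set M.W) (g : ℕ → M.D),
    Support M s g φ ↔ ∀ w ∈ s, Support M {w} g φ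

/-- A standard (Tarskian) relational structure for the signature. -/
structure Struc (σ : Sig) where
  D : Type
  dNonempty : Nonempty D
  predI : (P : σ.Pred) → (Fin (σ.parity P) → D) → Prop
  funcI : (f : σ.Func) → (Fin (σ.farity f) → D) → D

/-- Tarskian term denotation. -/
def Term.tval (A : Struc σ) (g : ℕ → A.D) : Term σ → A.D
  | .var n => g n
  | .func f ts => A.funcI f (fun i => (ts i).tval A g)

/-- Standard Tarskian satisfaction (reading `→` as material implication, `=` as identity). -/
def TSat (A : Struc σ) : (ℕ → A.D) → Formula σ → Prop
  | g, .pred P ts => A.predI P (fun i => (ts i).tval A g)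
  | g, .eq t t' => t.tval A g = t'.tval A g
  | _, .falsum => False
  | g, .conj φ ψ => TSat A g φ ∧ TSat A g ψ
  | g, .idisj φ ψ => TSat A g φ ∨ TSat A g ψ
  | g, .impl φ ψ => TSat A g φ → TSat A g ψ
  | g, .all x φ => ∀ d : A.D, TSat A (Function.update g x d) φ
  | g, .iex x φ => ∃ d : A.D, TSat A (Function.update g x d) φ

/-- Classical first-order (Tarskian) entailment. -/
def FOLEntails (Γ : Set (Formula σ)) (α : Formula σ) : Prop :=
  ∀ (A : Struc σ) (g : ℕ → A.D), (∀ γ ∈ Γ, TSat A g γ) → TSat A g α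

/-- The setoid on the domain given by `∼_w`. -/
def Model.setoidAt (M : Model σ) (w : M.W) : Setoid M.D := ⟨M.eqI w, M.eqEquiv w⟩

/-- The quotient relational structure `𝓜_w = (D/∼_w, I_w^∼)` induced at world `w`. -/
noncomputable def Model.quotStruc (M : Model σ) (w : M.W) : Struc σ where
  D := Quotient (M.setoidAt w)
  dNonempty := Nonempty.map (Quotient.mk (M.setoidAt w)) M.dNonempty
  predI P as := ∃ bs : Fin (σ.parity P) → M.D,
    (∀ i, Quotient.mk (M.setoidAt w) (bs i) = as i) ∧ M.predI w P bs
  funcI f as := Quotient.mk (M.setoidAt w) (M.funcI w f (fun i => (as i).out))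

/-- λt := ∃̷x (x = t). -/
def lam (x : ℕ) (t : Term σ) : Formula σ := .iex x (.eq (.var x) t)

/-- Conjunction of a finite list of formulas. -/
def conjList (l : List (Formula σ)) : Formula σ := l.foldr .conj Formula.verum

/-- x ≠ t. -/
def neTm (x : ℕ) (t : Term σ) : Formula σ := (Formula.eq (.var x) t).neg

/-- ∃̷x (x ≠ t). -/
def iexNe (t : Term σ) : Formula σ := .iex 0 (neTm 0 t)

/-- η := (=(a;b) ∧ =(b;a) ∧ ∃̷x(x≠b)) → ∃̷x(x≠a). -/
def etaOf (a b : Term σ) : Formula σ :=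
  .impl (.conj (.impl (lam 0 a) (lam 0 b))
          (.conj (.impl (lam 0 b) (lam 0 a)) (iexNe b)))
    (iexNe a)

/-- θ := ∃̷x ∃̷y ¬(x = a ∧ y = b). -/
def thetaOf (a b : Term σ) : Formula σ :=
  .iex 0 (.iex 1 (Formula.neg (.conj (.eq (.var 0) a) (.eq (.var 1) b))))

/-- ρ := ∀x∀y ?(x = y). -/
def rho : Formula σ := .all 0 (.all 1 (Formula.qm (.eq (.var 0) (.var 1))))

/-- The signature with exactly two constant symbols `a`, `b` (and no predicates). -/
def sigAB : Sig where
  Pred := Empty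
  parity := fun P => P.elim
  Func := Bool
  farity := fun _ => 0

/-- The constant `a`. -/
def tA : Term sigAB := .func false Fin.elim0

/-- The constant `b`. -/
def tB : Term sigAB := .func true Fin.elim0

def etaAB : Formula sigAB := etaOf tA tB

def thetaAB : Formula sigAB := thetaOf tA tB

/-- `a_w`. -/
def aVal (M : Model sigAB) (w : M.W) : M.D := M.funcI w false Fin.elim0

/-- `b_w`. -/
def bVal (M : Model sigAB) (w : M.W) : M.D := M.funcI w true Fin.elim0

/-- `R_s = {(a_w, b_w) | w ∈ s}`. -/
def RelOf (M : Model sigAB) (s : Set M.W) : Set (M.D × M.D) :=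
  {p | ∃ w ∈ s, p = (aVal M w, bVal M w)}

/-- An id-model (for the signature with the two constants a, b) is full if `R_W = D × D`. -/
def Model.IsFull (M : Model sigAB) : Prop := RelOf M Set.univ = Set.univ

/-- Classical existential quantifier ∃xφ := ¬∀x¬φ. -/
def cExists (x : ℕ) (φ : Formula σ) : Formula σ := (Formula.all x φ.neg).neg

/-- ⋀_{i<j<n} (xᵢ ≠ xⱼ). -/
def distinctFm (n : ℕ) : Formula sigAB :=
  conjList ((List.range n).flatMap fun i => (List.range n).filterMap fun j =>
    if i < j then some ((Formula.eq (.var i) (.var j)).neg) else none)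

/-- χₙ := ∃x₁…∃xₙ ⋀_{i<j} (xᵢ ≠ xⱼ), expressing that there are at least n elements. -/
def chi (n : ℕ) : Formula sigAB := (List.range n).foldr cExists (distinctFm n)

/-- The canonical full id-model over a nonempty domain `D`: worlds are pairs `(d, e)`,
with `a_{(d,e)} = d` and `b_{(d,e)} = e`. -/
def canonModel (D : Type) (hD : Nonempty D) : Model sigAB where
  W := D × D
  D := D
  wNonempty := Nonempty.map (fun d => (d, d)) hD
  dNonempty := hD
  predI := fun _ P => P.elim
  funcI := fun w f _ => cond f w.2 w.1
  eqI := fun _ => Eq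
  eqEquiv := fun _ => eq_equivalence
  predCongr := fun _ P => P.elim
  funcCongr := fun _ _ _ _ _ => rfl

/-- Extending a signature with two fresh constant symbols `a`, `b`. -/
def sigExt (σ : Sig) : Sig where
  Pred := σ.Pred
  parity := σ.parity
  Func := σ.Func ⊕ Bool
  farity := Sum.elim σ.farity (fun _ => 0)

/-- Lift of a term to the extended signature. -/
def Term.lift : Term σ → Term (sigExt σ)
  | .var n => .var n
  | .func f ts => .func (Sum.inl f) (fun i => (ts i).lift)

/-- Lift of a formula to the extended signature. -/
def Formula.lift : Formula σ → Formula (sigExt σ)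
  | .pred P ts => .pred P (fun i => (ts i).lift)
  | .eq t t' => .eq t.lift t'.lift
  | .falsum => .falsum
  | .conj φ ψ => .conj φ.lift ψ.lift
  | .idisj φ ψ => .idisj φ.lift ψ.lift
  | .impl φ ψ => .impl φ.lift ψ.lift
  | .all x φ => .all x φ.lift
  | .iex x φ => .iex x φ.lift

/-- The fresh constant `a` of the extended signature. -/
def extA : Term (sigExt σ) := .func (Sum.inr false) Fin.elim0

/-- The fresh constant `b` of the extended signature. -/
def extB : Term (sigExt σ) := .func (Sum.inr true) Fin.elim0

/-- The canonical full id-model based on a relational structure `𝓜`: worlds are pairs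
`(d, e)`; `a_{(d,e)} = d`, `b_{(d,e)} = e`, and all symbols of `σ` are interpreted
rigidly as in `𝓜`. -/
def canonModelOf (A : Struc σ) : Model (sigExt σ) where
  W := A.D × A.D
  D := A.D
  wNonempty := Nonempty.map (fun d => (d, d)) A.dNonempty
  dNonempty := A.dNonempty
  predI := fun _ P => A.predI P
  funcI := fun w f => match f with
    | .inl f₀ => fun as => A.funcI f₀ as
    | .inr b => fun _ => cond b w.2 w.1
  eqI := fun _ => Eq
  eqEquiv := fun _ => eq_equivalence
  predCongr := fun _ P as bs h => by
    have hab : as = bs := funext fun i => h i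
    rw [hab]
  funcCongr := fun w f as bs h => by
    have hab : as = bs := funext fun i => h i
    rw [hab]

/-- Classicalization of a formula: replace ⩒ and ∃̷ by their classical versions. -/
def Formula.cl : Formula σ → Formula σ
  | .pred P ts => .pred P ts
  | .eq t t' => .eq t t'
  | .falsum => .falsum
  | .conj φ ψ => .conj φ.cl ψ.cl
  | .idisj φ ψ => (Formula.conj φ.cl.neg ψ.cl.neg).neg
  | .impl φ ψ => .impl φ.cl ψ.cl
  | .all x φ => .all x φ.cl
  | .iex x φ => cExists x φ.cl

lemma cl_isClassical (φ : Formula σ) : φ.cl.IsClassical := by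
  induction φ with
  | pred P ts => trivial
  | eq t t' => trivial
  | falsum => trivial
  | conj φ ψ ihφ ihψ => exact ⟨ihφ, ihψ⟩
  | idisj φ ψ ihφ ihψ => exact ⟨⟨⟨ihφ, trivial⟩, ⟨ihψ, trivial⟩⟩, trivial⟩
  | impl φ ψ ihφ ihψ => exact ⟨ihφ, ihψ⟩
  | all x φ ih => exact ih
  | iex x φ ih => exact ⟨⟨ih, trivial⟩, trivial⟩

lemma empty_support (M : Model σ) (g : ℕ → M.D) (φ : Formula σ) :
    Support M ∅ g φ := by
  induction φ generalizing g with
  | pred P ts => intro w hw; exact absurd hw (Set.notMem_empty w)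
  | eq t t' => intro w hw; exact absurd hw (Set.notMem_empty w)
  | falsum => rfl
  | conj φ ψ ihφ ihψ => exact ⟨ihφ g, ihψ g⟩
  | idisj φ ψ ihφ ihψ => exact Or.inl (ihφ g)
  | impl φ ψ ihφ ihψ =>
      intro t ht _
      rw [Set.subset_empty_iff] at ht
      rw [ht]; exact ihψ g
  | all x φ ih => intro d; exact ih _
  | iex x φ ih => exact ⟨Classical.choice M.dNonempty, ih _⟩

lemma singleton_neg (M : Model σ) (w : M.W) (g : ℕ → M.D) (φ : Formula σ) :
    Support M {w} g φ.neg ↔ ¬ Support M {w} g φ := by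
  constructor
  · intro h hφ
    have := h {w} (subset_refl _) hφ
    exact absurd (congrArg (w ∈ ·) this) (by simp)
  · intro h t ht hφ
    rcases Set.subset_singleton_iff_eq.mp ht with h0 | h1
    · exact h0
    · exact absurd (h1 ▸ hφ) h

lemma singleton_impl (M : Model σ) (w : M.W) (g : ℕ → M.D) (φ ψ : Formula σ) :
    Support M {w} g (.impl φ ψ) ↔ (Support M {w} g φ → Support M {w} g ψ) := by
  constructor
  · intro h hφ; exact h {w} (subset_refl _) hφ
  · intro h t ht hφ
    rcases Set.subset_singleton_iff_eq.mp ht with h0 | h1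
    · rw [h0]; exact empty_support M g ψ
    · subst h1; exact h hφ

lemma singleton_cl (M : Model σ) (w : M.W) (φ : Formula σ) :
    ∀ g : ℕ → M.D, Support M {w} g φ ↔ Support M {w} g φ.cl := by
  induction φ with
  | pred P ts => intro g; exact Iff.rfl
  | eq t t' => intro g; exact Iff.rfl
  | falsum => intro g; exact Iff.rfl
  | conj φ ψ ihφ ihψ =>
      intro g
      exact and_congr (ihφ g) (ihψ g)
  | idisj φ ψ ihφ ihψ =>
      intro g
      show (Support M {w} g φ ∨ Support M {w} g ψ) ↔ _
      rw [show (Formula.idisj φ ψ).cl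
            = (Formula.conj φ.cl.neg ψ.cl.neg).neg from rfl,
        singleton_neg]
      show _ ↔ ¬ (Support M {w} g φ.cl.neg ∧ Support M {w} g ψ.cl.neg)
      rw [singleton_neg, singleton_neg, ← ihφ g, ← ihψ g]
      tauto
  | impl φ ψ ihφ ihψ =>
      intro g
      rw [show (Formula.impl φ ψ).cl = Formula.impl φ.cl ψ.cl from rfl,
        singleton_impl, singleton_impl, ihφ g, ihψ g]
  | all x φ ih =>
      intro g
      exact forall_congr' fun d => ih _
  | iex x φ ih =>
      intro g
      show (∃ d, Support M {w} (Function.update g x d) φ) ↔ _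
      rw [show (Formula.iex x φ).cl = (Formula.all x φ.cl.neg).neg from rfl,
        singleton_neg]
      show _ ↔ ¬ ∀ d, Support M {w} (Function.update g x d) φ.cl.neg
      rw [not_forall]
      refine exists_congr fun d => ?_
      rw [singleton_neg, not_not, ih]

lemma classical_tc (φ : Formula σ) (h : φ.IsClassical) : TruthConditional φ := by
  induction φ with
  | pred P ts =>
      intro M s g
      constructor
      · intro hs w hw w' hw'
        rw [Set.mem_singleton_iff] at hw'; subst hw'; exact hs _ hw
      · intro hs w hw; exact hs w hw w rfl
  | eq t t' =>
      intro M s g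
      constructor
      · intro hs w hw w' hw'
        rw [Set.mem_singleton_iff] at hw'; subst hw'; exact hs _ hw
      · intro hs w hw; exact hs w hw w rfl
  | falsum =>
      intro M s g
      show s = ∅ ↔ ∀ w ∈ s, ({w} : Set M.W) = ∅
      constructor
      · intro hs w hw; rw [hs] at hw; exact absurd hw (Set.notMem_empty w)
      · intro hs
        ext w
        simp only [Set.mem_empty_iff_false, iff_false]
        intro hw
        exact absurd (congrArg (w ∈ ·) (hs w hw)) (by simp)
  | conj φ ψ ihφ ihψ =>
      intro M s g
      show (Support M s g φ ∧ Support M s g ψ) ↔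
        ∀ w ∈ s, Support M {w} g φ ∧ Support M {w} g ψ
      rw [ihφ h.1 M s g, ihψ h.2 M s g]
      constructor
      · intro hc w hw; exact ⟨hc.1 w hw, hc.2 w hw⟩
      · intro hs; exact ⟨fun w hw => (hs w hw).1, fun w hw => (hs w hw).2⟩
  | idisj φ ψ ihφ ihψ => exact absurd h not_false
  | impl φ ψ ihφ ihψ =>
      intro M s g
      constructor
      · intro hs w hw t ht hφ
        exact hs t (ht.trans (Set.singleton_subset_iff.mpr hw)) hφ
      · intro hs t ht hφ
        rw [ihψ h.2 M t g]
        intro w hw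
        exact (singleton_impl M w g φ ψ).mp (hs w (ht hw))
          ((ihφ h.1 M t g).mp hφ w hw)
  | all x φ ih =>
      intro M s g
      show (∀ d, Support M s (Function.update g x d) φ) ↔
        ∀ w ∈ s, ∀ d, Support M {w} (Function.update g x d) φ
      constructor
      · intro hs w hw d
        exact (ih h M s _).mp (hs d) w hw
      · intro hs d
        rw [ih h M s _]
        intro w hw
        exact hs w hw d
  | iex x φ ih => exact absurd h not_false

/-- A formula of InqBQ is truth-conditional iff it is equivalent to a
classical formula; in particular, every classical formula is truth-conditional. -/
theorem truthConditional_iff_equiv_classical (σ : Sig) (φ : Formula σ) :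
    (TruthConditional φ ↔ ∃ α : Formula σ, α.IsClassical ∧ FmEquiv φ α) ∧
    (φ.IsClassical → TruthConditional φ) := by
  refine ⟨⟨fun htc => ?_, fun ⟨α, hα, heq⟩ M s g => ?_⟩, fun h => classical_tc φ h⟩
  · refine ⟨φ.cl, cl_isClassical φ, fun M s g => ?_⟩
    rw [htc M s g, classical_tc φ.cl (cl_isClassical φ) M s g]
    exact forall_congr' fun w => forall_congr' fun hw => singleton_cl M w φ g
  · rw [heq M s g, classical_tc α hα M s g]
    exact forall_congr' fun w => forall_congr' fun hw => (heq M {w} g).symm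

end InqBQ
end

section
/- Id-entailment reduces to general entailment with a rigidity premise: for every set of formulas Φ and every formula ψ, Φ ⊨_id ψ if and only if Φ ∪ {∀x∀y?(x=y)} ⊨ ψ. -/
namespace InqBQ

variable {σ : Sig}

/-!
In an id-model `ρ` is supported everywhere, since each `x = y` is either settled true or
settled false. Conversely, a nonempty state `s` supports `ρ` exactly when the relations `∼_w`
coincide for all `w ∈ s`. Restricting `M` to the worlds of `s` and identifying elements that are
`∼`-equal throughout `s` then yields an id-model in which every formula has the same support,
so `Φ ⊨_id ψ` transfers. The empty state supports every formula.
-/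

section Collapse

variable {σ : Sig} (M : Model σ)

lemma support_empty (g : ℕ → M.D) (φ : Formula σ) : Support M ∅ g φ := by
  induction φ generalizing g with
  | pred | eq => exact fun _ h => h.elim
  | falsum => rfl
  | conj _ _ ih₁ ih₂ => exact ⟨ih₁ g, ih₂ g⟩
  | idisj _ _ ih₁ _ => exact Or.inl (ih₁ g)
  | impl _ _ _ ih₂ => rintro t ht -; rw [Set.subset_empty_iff.1 ht]; exact ih₂ g
  | all _ _ ih => exact fun _ => ih _
  | iex _ _ ih => exact M.dNonempty.elim fun d => ⟨d, ih _⟩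

lemma support_neg_eq_iff (s : Set M.W) (g : ℕ → M.D) (t t' : Term σ) :
    Support M s g (Formula.eq t t').neg ↔
      ∀ w ∈ s, ¬ M.eqI w (t.val M w g) (t'.val M w g) := by
  refine ⟨fun h w hw hw' => ?_, fun h u hu hu' => ?_⟩
  · refine Set.singleton_ne_empty w (h {w} (Set.singleton_subset_iff.2 hw) ?_)
    rintro _ rfl
    exact hw'
  · exact Set.eq_empty_iff_forall_notMem.2 fun w hw => h w (hu hw) (hu' w hw)

def Model.EqUniformOn (s : Set M.W) : Prop :=
  ∀ w ∈ s, ∀ d d', M.eqI w d d' → ∀ w' ∈ s, M.eqI w' d d'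

lemma Model.IsId.eqUniformOn {M : Model σ} (hM : M.IsId) (s : Set M.W) : M.EqUniformOn s :=
  fun w _ d d' h w' _ => (hM w' d d').2 ((hM w d d').1 h)

lemma support_rho_iff (s : Set M.W) (g : ℕ → M.D) : Support M s g rho ↔ M.EqUniformOn s := by
  simp only [rho, Support, Formula.qm, support_neg_eq_iff, Term.val, Function.update_self,
    ne_eq, zero_ne_one, not_false_eq_true, Function.update_of_ne]
  refine ⟨fun h w hw d d' hdd' => (h d d').resolve_right fun hne => hne w hw hdd',
    fun h d d' => ?_⟩
  refine or_iff_not_imp_right.2 fun hne => ?_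
  obtain ⟨w, hw, hdd'⟩ := not_forall₂.1 hne
  exact h w hw d d' (not_not.1 hdd')

def Model.stateSetoid (s : Set M.W) : Setoid M.D where
  r d d' := ∀ w ∈ s, M.eqI w d d'
  iseqv := ⟨fun d w _ => (M.eqEquiv w).refl d, fun h w hw => (M.eqEquiv w).symm (h w hw),
    fun h₁ h₂ w hw => (M.eqEquiv w).trans (h₁ w hw) (h₂ w hw)⟩

/-- Symbols are interpreted on representatives (`Quotient.out`); this agrees with `M` only
when `M.EqUniformOn s`. -/
noncomputable abbrev Model.collapse (s : Set M.W) (hs : s.Nonempty) : Model σ where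
  W := s
  D := Quotient (M.stateSetoid s)
  wNonempty := hs.to_subtype
  dNonempty := M.dNonempty.map (Quotient.mk _)
  predI w P as := M.predI w P fun i => (as i).out
  funcI w f as := Quotient.mk _ (M.funcI w f fun i => (as i).out)
  eqI _ := Eq
  eqEquiv _ := eq_equivalence
  predCongr _ _ _ _ h := by rw [funext h]
  funcCongr _ _ _ _ h := by rw [funext h]

variable {M} {s : Set M.W} (hs : s.Nonempty)

lemma Model.collapse_isId : (M.collapse s hs).IsId := fun _ _ _ => Iff.rfl

lemma Model.EqUniformOn.mk_eq_mk_iff (huni : M.EqUniformOn s) {w : M.W} (hw : w ∈ s)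
    (d d' : M.D) :
    Quotient.mk (M.stateSetoid s) d = Quotient.mk _ d' ↔ M.eqI w d d' :=
  Quotient.eq.trans ⟨fun h => h w hw, huni w hw d d'⟩

lemma Term.val_collapse (huni : M.EqUniformOn s) (g : ℕ → M.D) (w : s) (t : Term σ) :
    t.val (M.collapse s hs) w (Quotient.mk _ ∘ g) = Quotient.mk _ (t.val M w g) := by
  induction t with
  | var => rfl
  | func f ts ih =>
    refine (huni.mk_eq_mk_iff w.2 _ _).2 (M.funcCongr w f _ _ fun i => ?_)
    dsimp only
    rw [ih i]
    exact Quotient.mk_out (s := M.stateSetoid s) _ w w.2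

lemma support_image_iff_collapse (huni : M.EqUniformOn s) (φ : Formula σ) (u : Set s)
    (g : ℕ → M.D) :
    Support M (Subtype.val '' u) g φ ↔ Support (M.collapse s hs) u (Quotient.mk _ ∘ g) φ := by
  induction φ generalizing u g with
  | pred P ts =>
    simp only [Support, Set.forall_mem_image, Term.val_collapse hs huni]
    refine forall₂_congr fun w _ => M.predCongr w P _ _ fun i => ?_
    exact (M.eqEquiv w).symm (Quotient.mk_out (s := M.stateSetoid s) _ w w.2)
  | eq t t' =>
    simp only [Support, Set.forall_mem_image, Term.val_collapse hs huni]
    exact forall₂_congr fun w _ => (huni.mk_eq_mk_iff w.2 _ _).symm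
  | falsum => exact Set.image_eq_empty
  | conj _ _ ih₁ ih₂ => exact and_congr (ih₁ u g) (ih₂ u g)
  | idisj _ _ ih₁ ih₂ => exact or_congr (ih₁ u g) (ih₂ u g)
  | impl _ _ ih₁ ih₂ =>
    refine ⟨fun h v hv hφ => ?_, fun h t ht hφ => ?_⟩
    · exact (ih₂ v g).1 (h _ (Set.image_mono hv) ((ih₁ v g).2 hφ))
    · -- every substate of `val '' u` is itself the image of a substate of `u`
      rw [← Set.image_preimage_eq_of_subset (ht.trans (Set.image_subset_range _ _))] at hφ ⊢
      have hsub : Subtype.val ⁻¹' t ⊆ u :=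
        (Set.preimage_mono ht).trans (Set.preimage_image_eq u Subtype.val_injective).subset
      exact (ih₂ _ g).2 (h _ hsub ((ih₁ _ g).1 hφ))
  | all x _ ih =>
    simp only [Support, ih, Function.comp_update, Quotient.forall]
  | iex x _ ih =>
    simp only [Support, ih, Function.comp_update, Quotient.exists]

lemma support_iff_collapse (huni : M.EqUniformOn s) (g : ℕ → M.D) (φ : Formula σ) :
    Support M s g φ ↔ Support (M.collapse s hs) Set.univ (Quotient.mk _ ∘ g) φ := by
  rw [← support_image_iff_collapse hs huni, Subtype.coe_image_univ]

end Collapse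

/-- Id-entailment reduces to general entailment with the rigidity premise
∀x∀y?(x=y). -/
theorem entailsId_iff_entails_with_rigidity (σ : Sig) (Φ : Set (Formula σ)) (ψ : Formula σ) :
    EntailsId Φ ψ ↔ Entails (Φ ∪ {rho}) ψ := by
  constructor
  · intro hid M s g hsupp
    obtain rfl | hs := s.eq_empty_or_nonempty
    · exact support_empty M g ψ
    have huni : M.EqUniformOn s := (support_rho_iff M s g).1 (hsupp rho (Or.inr rfl))
    rw [support_iff_collapse hs huni]
    exact hid _ (M.collapse_isId hs) _ _ fun φ hφ =>
      (support_iff_collapse hs huni g φ).1 (hsupp φ (Or.inl hφ))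
  · intro hent M hM s g hsupp
    refine hent M s g fun φ hφ => hφ.elim (hsupp φ) ?_
    rintro rfl
    exact (support_rho_iff M s g).2 (hM.eqUniformOn s)

end InqBQ
end

section
/- Finiteness via η in full models: in the signature with exactly two constant symbols a,b, for every full id-model M with domain D: M ⊨ η if and only if D is finite. -/
namespace InqBQ

variable {σ : Sig}

section Aux

variable {M : Model sigAB} (hid : M.IsId)

lemma val_var (w : M.W) (g : ℕ → M.D) (n : ℕ) :
    (Term.var n : Term sigAB).val M w g = g n := rfl

lemma val_const (c : Bool) (w : M.W) (g : ℕ → M.D) :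
    (Term.func c Fin.elim0 : Term sigAB).val M w g = M.funcI w c Fin.elim0 := by
  show M.funcI w c _ = _
  congr 1
  funext i; exact i.elim0

lemma supp_conj {σ : Sig} (N : Model σ) (s : Set N.W) (g : ℕ → N.D) (φ ψ : Formula σ) :
    Support N s g (.conj φ ψ) ↔ Support N s g φ ∧ Support N s g ψ := Iff.rfl

lemma supp_impl {σ : Sig} (N : Model σ) (s : Set N.W) (g : ℕ → N.D) (φ ψ : Formula σ) :
    Support N s g (.impl φ ψ) ↔
      ∀ t : Set N.W, t ⊆ s → Support N t g φ → Support N t g ψ := Iff.rfl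

include hid

/-- Support of `λc` on a state: the constant `c` is rigid on the state. -/
lemma supp_lam (c : Bool) (t : Set M.W) (g : ℕ → M.D) :
    Support M t g (lam 0 (.func c Fin.elim0)) ↔
      ∃ d, ∀ w ∈ t, M.funcI w c Fin.elim0 = d := by
  simp only [lam, Support, val_var, val_const, Function.update_self]
  constructor
  · rintro ⟨d, h⟩; exact ⟨d, fun w hw => ((hid w _ _).1 (h w hw)).symm⟩
  · rintro ⟨d, h⟩; exact ⟨d, fun w hw => (hid w _ _).2 (h w hw).symm⟩

/-- Support of `=(c;c')` on a state: a pairwise functional dependency. -/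
lemma supp_impl_lam (c c' : Bool) (t : Set M.W) (g : ℕ → M.D) :
    Support M t g (.impl (lam 0 (.func c Fin.elim0)) (lam 0 (.func c' Fin.elim0))) ↔
      ∀ w ∈ t, ∀ w' ∈ t, M.funcI w c Fin.elim0 = M.funcI w' c Fin.elim0 →
        M.funcI w c' Fin.elim0 = M.funcI w' c' Fin.elim0 := by
  rw [supp_impl]
  constructor
  · intro h w hw w' hw' hcc
    have hsub : ({w, w'} : Set M.W) ⊆ t := by
      intro x hx
      rw [Set.mem_insert_iff, Set.mem_singleton_iff] at hx
      rcases hx with rfl | rfl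
      · exact hw
      · exact hw'
    have hc : Support M {w, w'} g (lam 0 (.func c Fin.elim0)) := by
      rw [supp_lam hid]
      refine ⟨M.funcI w' c Fin.elim0, ?_⟩
      intro x hx
      rw [Set.mem_insert_iff, Set.mem_singleton_iff] at hx
      rcases hx with rfl | rfl
      · exact hcc
      · rfl
    obtain ⟨d, hd⟩ := (supp_lam hid c' _ g).1 (h {w, w'} hsub hc)
    rw [hd w (Set.mem_insert _ _), hd w' (Set.mem_insert_of_mem _ rfl)]
  · intro h t' ht' hc
    rw [supp_lam hid] at hc ⊢
    obtain ⟨d, hd⟩ := hc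
    rcases Set.eq_empty_or_nonempty t' with rfl | ⟨w0, hw0⟩
    · exact ⟨Classical.choice M.dNonempty, fun w hw => absurd hw (by simp)⟩
    · refine ⟨M.funcI w0 c' Fin.elim0, fun w hw => ?_⟩
      exact h w (ht' hw) w0 (ht' hw0) (by rw [hd w hw, hd w0 hw0])

/-- Support of `∃̷x (x ≠ c)` on a state: some element differs from `c` everywhere. -/
lemma supp_iexNe (c : Bool) (t : Set M.W) (g : ℕ → M.D) :
    Support M t g (iexNe (.func c Fin.elim0)) ↔
      ∃ d, ∀ w ∈ t, M.funcI w c Fin.elim0 ≠ d := by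
  simp only [iexNe, neTm, Formula.neg, Support, val_var, val_const, Function.update_self]
  constructor
  · rintro ⟨d, h⟩
    refine ⟨d, fun w hw hEq => ?_⟩
    have := h {w} (Set.singleton_subset_iff.2 hw)
      (fun w' hw' => by rcases hw' with rfl; exact (hid _ _ _).2 hEq.symm)
    exact (Set.singleton_ne_empty w) this
  · rintro ⟨d, h⟩
    refine ⟨d, fun t' ht' hall => ?_⟩
    refine Set.eq_empty_iff_forall_notMem.2 fun w hw => ?_
    exact h w (ht' hw) ((hid w _ _).1 (hall w hw)).symm

omit hid

/-- An infinite type admits an injective, non-surjective self-map. -/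
lemma exists_inj_not_surj (D : Type) [Infinite D] :
    ∃ f : D → D, Function.Injective f ∧ ∃ d0, ∀ x, f x ≠ d0 := by
  classical
  let e := Infinite.natEmbedding D
  refine ⟨fun x => if h : ∃ n, e n = x then e (Nat.find h + 1) else x, ?_, e 0, ?_⟩
  · intro x y hxy
    by_cases hx : ∃ n, e n = x <;> by_cases hy : ∃ n, e n = y <;>
      simp only [hx, hy, dif_pos, dif_neg, not_false_iff] at hxy
    · have hfind : Nat.find hx = Nat.find hy := Nat.succ_injective (e.injective hxy)
      rw [← Nat.find_spec hx, ← Nat.find_spec hy, hfind]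
    · exact absurd ⟨_, hxy⟩ hy
    · exact absurd ⟨_, hxy.symm⟩ hx
    · exact hxy
  · intro x
    by_cases hx : ∃ n, e n = x <;> simp only [hx, dif_pos, dif_neg, not_false_iff]
    · intro h; exact Nat.succ_ne_zero _ (e.injective h)
    · intro h; exact hx ⟨0, h.symm⟩

end Aux

/-- Finiteness via η in full models: a full id-model (for the signature
with exactly two constants a, b) supports η iff its domain is finite. -/
theorem full_model_supports_eta_iff_finite (M : Model sigAB) (hid : M.IsId)
    (hfull : M.IsFull) :
    (∀ g : ℕ → M.D, Support M Set.univ g etaAB) ↔ Finite M.D := by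
  classical
  constructor
  · intro hsup
    by_contra hinf
    rw [not_finite_iff_infinite] at hinf
    obtain ⟨f, hfinj, d0, hd0⟩ := exists_inj_not_surj M.D
    set g : ℕ → M.D := fun _ => Classical.choice M.dNonempty with hg
    set t : Set M.W :=
      {w | M.funcI w true Fin.elim0 = f (M.funcI w false Fin.elim0)} with ht
    have hη := hsup g
    simp only [etaAB, etaOf, tA, tB] at hη
    rw [supp_impl] at hη
    have hcons := hη t (Set.subset_univ t) ?ante
    case ante =>
      rw [supp_conj, supp_conj]
      refine ⟨?_, ?_, ?_⟩
      · rw [supp_impl_lam hid]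
        intro w hw w' hw' hcc
        have h1 : M.funcI w true Fin.elim0 = f (M.funcI w false Fin.elim0) := hw
        have h2 : M.funcI w' true Fin.elim0 = f (M.funcI w' false Fin.elim0) := hw'
        rw [h1, h2, hcc]
      · rw [supp_impl_lam hid]
        intro w hw w' hw' hcc
        have h1 : M.funcI w true Fin.elim0 = f (M.funcI w false Fin.elim0) := hw
        have h2 : M.funcI w' true Fin.elim0 = f (M.funcI w' false Fin.elim0) := hw'
        exact hfinj (by rw [← h1, ← h2, hcc])
      · rw [supp_iexNe hid]
        refine ⟨d0, fun w hw => ?_⟩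
        have h1 : M.funcI w true Fin.elim0 = f (M.funcI w false Fin.elim0) := hw
        rw [h1]; exact hd0 _
    rw [supp_iexNe hid] at hcons
    obtain ⟨d, hd⟩ := hcons
    have hmem : ((d, f d) : M.D × M.D) ∈ RelOf M Set.univ := by
      rw [hfull]; trivial
    obtain ⟨w, -, hwv⟩ := hmem
    have ha : aVal M w = d := congrArg Prod.fst hwv.symm
    have hb : bVal M w = f d := congrArg Prod.snd hwv.symm
    have hwt : w ∈ t := by
      show M.funcI w true Fin.elim0 = f (M.funcI w false Fin.elim0)
      show bVal M w = f (aVal M w)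
      rw [ha, hb]
    exact hd w hwt ha
  · intro hfin g
    show Support M Set.univ g etaAB
    simp only [etaAB, etaOf, tA, tB]
    rw [supp_impl]
    intro t _ hant
    rw [supp_conj, supp_conj] at hant
    obtain ⟨h1, h2, h3⟩ := hant
    rw [supp_impl_lam hid] at h1 h2
    rw [supp_iexNe hid] at h3
    obtain ⟨d0, hd0⟩ := h3
    rw [supp_iexNe hid]
    by_contra hcon
    push_neg at hcon
    have hall : ∀ d : M.D, ∃ w, w ∈ t ∧ M.funcI w false Fin.elim0 = d := by
      intro d
      obtain ⟨w, hw, hne⟩ := hcon d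
      exact ⟨w, hw, hne⟩
    choose wit hwit hwa using hall
    set f : M.D → M.D := fun d => M.funcI (wit d) true Fin.elim0 with hf
    have hfinj : Function.Injective f := by
      intro x y hxy
      have := h2 (wit x) (hwit x) (wit y) (hwit y) hxy
      rw [hwa x, hwa y] at this
      exact this
    have hfsurj : Function.Surjective f := Finite.surjective_of_injective hfinj
    obtain ⟨d, hd⟩ := hfsurj d0
    exact hd0 (wit d) (hwit d) hd

end InqBQ
end
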